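/- Let g = A_{5,2} with orthonormal basis v1,…,v5 and nonzero brackets [v1,v2]=αv3+βv4, [v1,v3]=γv4, [v1,v4]=δv5 (α,γ,δ>0, β∈ℝ). If ξ = Σξ_i v_i and ω ∈ g* satisfy (L_ξ∇)(v,w) = ω(v)w + ω(w)v for all v,w, then ξ1 = ξ2 = ξ3 = ξ4 = 0 and ω ≡ 0; hence every left-invariant projective vector field on A_{5,2} is affine and lies in the center span{v5}. -/

import Mathlib

local notation "⟪" x ", " y "⟫" => @inner ℝ _ _ x y

/-- The underlying space `ℝ⁵`. -/
abbrev V := EuclideanSpace ℝ (Fin 5)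

/-- The standard orthonormal basis; `e 0,…,e 4` play the roles of `v1,…,v5`. -/
noncomputable def e (i : Fin 5) : V := EuclideanSpace.single i 1

/-!
A component of `(L_ξ∇)(e i, e j)` along `e k` with `k ∉ {i, j}` receives nothing from `ω`.
Four such components, read off the Koszul formula, form a triangular system in
`ξ 0, …, ξ 3` whose diagonal coefficients `-γ², -αδ/2, -γ², -δ²` do not vanish. Hence `ξ` lies
in the centre `span {e 4}`, so `ad ξ = 0` and `L_ξ∇ = 0`; then `ω v • v + ω v • v = 0` for every
`v`, which forces `ω = 0`.
-/

theorem LinearMap.apply_self_eq_zero_of_skew {M N : Type*} [AddCommGroup M] [Module ℝ M]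
    [AddCommGroup N] [Module ℝ N] {B : M →ₗ[ℝ] M →ₗ[ℝ] N} (hB : ∀ x y, B x y = -B y x) (x : M) :
    B x x = 0 := by
  have h : (2 : ℝ) • B x x = 0 := by
    rw [two_smul]
    nth_rewrite 1 [hB x x]
    exact neg_add_cancel _
  exact (smul_eq_zero.mp h).resolve_left two_ne_zero

theorem LinearMap.ext_basis_of_skew {ι M N : Type*} [LinearOrder ι] [AddCommGroup M] [Module ℝ M]
    [AddCommGroup N] [Module ℝ N] (bM : Module.Basis ι ℝ M) {B B' : M →ₗ[ℝ] M →ₗ[ℝ] N}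
    (hB : ∀ x y, B x y = -B y x) (hB' : ∀ x y, B' x y = -B' y x)
    (h : ∀ i j, i < j → B (bM i) (bM j) = B' (bM i) (bM j)) : B = B' := by
  refine LinearMap.ext_basis bM bM fun i j => ?_
  rcases lt_trichotomy i j with hij | rfl | hij
  · exact h i j hij
  · rw [apply_self_eq_zero_of_skew hB, apply_self_eq_zero_of_skew hB']
  · rw [hB, hB', h j i hij]

theorem LinearMap.eq_zero_of_forall_smul_add_smul_eq_zero {E : Type*} [AddCommGroup E]
    [Module ℝ E] {ω : E →ₗ[ℝ] ℝ} (h : ∀ v w, ω v • w + ω w • v = 0) : ω = 0 := by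
  ext v
  have hv : (2 * ω v) • v = 0 := by rw [two_mul, add_smul]; exact h v v
  rcases smul_eq_zero.mp hv with hωv | rfl
  · simpa using hωv
  · exact map_zero ω

section LeviCivita

variable {E : Type*} [NormedAddCommGroup E] [InnerProductSpace ℝ E]

def IsLeviCivitaProduct (B : E →ₗ[ℝ] E →ₗ[ℝ] E) (nab : E → E → E) : Prop :=
  ∀ x y z, 2 * ⟪nab x y, z⟫ = ⟪B x y, z⟫ - ⟪B y z, x⟫ + ⟪B z x, y⟫

def lieDerivConnection (B : E →ₗ[ℝ] E →ₗ[ℝ] E) (nab : E → E → E) (ξ v w : E) : E :=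
  B ξ (nab v w) - nab (B ξ v) w - nab v (B ξ w)

variable {B : E →ₗ[ℝ] E →ₗ[ℝ] E} {nab : E → E → E}

theorem IsLeviCivitaProduct.zero_left (h : IsLeviCivitaProduct B nab) (y : E) : nab 0 y = 0 :=
  ext_inner_right ℝ fun z => by have := h 0 y z; simp at this ⊢; linarith

theorem IsLeviCivitaProduct.zero_right (h : IsLeviCivitaProduct B nab) (x : E) : nab x 0 = 0 :=
  ext_inner_right ℝ fun z => by have := h x 0 z; simp at this ⊢; linarith

theorem IsLeviCivitaProduct.lieDerivConnection_eq_zero (h : IsLeviCivitaProduct B nab) {ξ : E}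
    (hξ : ∀ x, B ξ x = 0) (v w : E) : lieDerivConnection B nab ξ v w = 0 := by
  simp [lieDerivConnection, hξ, h.zero_left, h.zero_right]

end LeviCivita

theorem e_apply (i k : Fin 5) : e i k = if k = i then 1 else 0 := by
  simp [e, PiLp.single_apply]

theorem inner_e (x : V) (k : Fin 5) : ⟪x, e k⟫ = x k := by
  simp [e, EuclideanSpace.inner_single_right]

theorem IsLeviCivitaProduct.apply {B : V →ₗ[ℝ] V →ₗ[ℝ] V} {nab : V → V → V}
    (h : IsLeviCivitaProduct B nab) (x y : V) (k : Fin 5) :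
    nab x y k = (⟪B x y, e k⟫ - ⟪B y (e k), x⟫ + ⟪B (e k) x, y⟫) / 2 := by
  have := h x y (e k)
  rw [inner_e] at this
  linarith

theorem lieDerivConnection_apply_eq_zero_of_ne {B : V →ₗ[ℝ] V →ₗ[ℝ] V} {nab : V → V → V}
    {ξ : V} {ω : V →ₗ[ℝ] ℝ} (hproj : ∀ v w, lieDerivConnection B nab ξ v w = ω v • w + ω w • v)
    {i j k : Fin 5} (hi : k ≠ i) (hj : k ≠ j) : lieDerivConnection B nab ξ (e i) (e j) k = 0 := by
  simp [hproj, e_apply, hi, hj]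

namespace A52

variable (α β γ δ : ℝ)

-- `A_{5,2}` is the semidirect product `ℝ e 0 ⋉ span {e 1, …, e 4}` with `ad (e 0) = ad₀`.
noncomputable def ad₀ (y : V) : V :=
  y 1 • (α • e 2 + β • e 3) + y 2 • (γ • e 3) + y 3 • (δ • e 4)

noncomputable def bracket : V →ₗ[ℝ] V →ₗ[ℝ] V :=
  LinearMap.mk₂ ℝ (fun x y => x 0 • ad₀ α β γ δ y - y 0 • ad₀ α β γ δ x)
    (fun x x' y => by simp only [ad₀, PiLp.add_apply]; module)
    (fun c x y => by simp only [ad₀, PiLp.smul_apply, smul_eq_mul]; module)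
    (fun x y y' => by simp only [ad₀, PiLp.add_apply]; module)
    (fun c x y => by simp only [ad₀, PiLp.smul_apply, smul_eq_mul]; module)

theorem bracket_skew (x y : V) : bracket α β γ δ x y = -bracket α β γ δ y x := by
  simp only [bracket, LinearMap.mk₂_apply]
  abel

variable {α β γ δ}

theorem eq_bracket {b : V →ₗ[ℝ] V →ₗ[ℝ] V} (hskew : ∀ x y, b x y = - b y x)
    (h12 : b (e 0) (e 1) = α • e 2 + β • e 3) (h13 : b (e 0) (e 2) = γ • e 3)
    (h14 : b (e 0) (e 3) = δ • e 4)
    (hzero : ∀ i j : Fin 5, i < j →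
      (i, j) ∉ ({(0, 1), (0, 2), (0, 3)} : Set (Fin 5 × Fin 5)) → b (e i) (e j) = 0) :
    b = bracket α β γ δ := by
  refine LinearMap.ext_basis_of_skew (EuclideanSpace.basisFun (Fin 5) ℝ).toBasis hskew
    (bracket_skew α β γ δ) fun i j hij => ?_
  simp only [OrthonormalBasis.coe_toBasis, EuclideanSpace.basisFun_apply]
  change b (e i) (e j) = bracket α β γ δ (e i) (e j)
  by_cases hT : (i, j) ∈ ({(0, 1), (0, 2), (0, 3)} : Set (Fin 5 × Fin 5))
  · obtain ⟨rfl, rfl⟩ | ⟨rfl, rfl⟩ | ⟨rfl, rfl⟩ := by simpa only [Set.mem_insert_iff,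
      Set.mem_singleton_iff, Prod.mk.injEq] using hT
    all_goals simp [h12, h13, h14, bracket, ad₀, e_apply]
  · rw [hzero i j hij hT]
    fin_cases i <;> fin_cases j <;> simp [bracket, ad₀, e_apply] at hij hT ⊢

theorem bracket_left_eq_zero {ξ : V} (h0 : ξ 0 = 0) (h1 : ξ 1 = 0) (h2 : ξ 2 = 0)
    (h3 : ξ 3 = 0) (x : V) : bracket α β γ δ ξ x = 0 := by
  simp [bracket, ad₀, h0, h1, h2, h3]

theorem mem_span_e_four {ξ : V} (h0 : ξ 0 = 0) (h1 : ξ 1 = 0) (h2 : ξ 2 = 0) (h3 : ξ 3 = 0) :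
    ξ ∈ Submodule.span ℝ ({e 4} : Set V) := by
  refine Submodule.mem_span_singleton.mpr ⟨ξ 4, ?_⟩
  ext k
  fin_cases k <;> simp [e_apply, h0, h1, h2, h3]

variable {nab : V → V → V}

theorem lieDerivConnection_two_two_apply_zero
    (h : IsLeviCivitaProduct (bracket α β γ δ) nab) (ξ : V) :
    lieDerivConnection (bracket α β γ δ) nab ξ (e 2) (e 2) 0 = -γ ^ 2 * ξ 0 := by
  simp [lieDerivConnection, h.apply, bracket, ad₀, e_apply, PiLp.inner_apply]
  ring

theorem lieDerivConnection_three_four_apply_two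
    (h : IsLeviCivitaProduct (bracket α β γ δ) nab) (ξ : V) :
    lieDerivConnection (bracket α β γ δ) nab ξ (e 3) (e 4) 2 = -α * δ * ξ 1 / 2 := by
  simp [lieDerivConnection, h.apply, bracket, ad₀, e_apply, PiLp.inner_apply]
  ring

theorem lieDerivConnection_zero_zero_apply_two
    (h : IsLeviCivitaProduct (bracket α β γ δ) nab) (ξ : V) :
    lieDerivConnection (bracket α β γ δ) nab ξ (e 0) (e 0) 2 = -γ ^ 2 * ξ 2 - β * γ * ξ 1 := by
  simp [lieDerivConnection, h.apply, bracket, ad₀, e_apply, PiLp.inner_apply]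
  ring

theorem lieDerivConnection_zero_zero_apply_three
    (h : IsLeviCivitaProduct (bracket α β γ δ) nab) (ξ : V) :
    lieDerivConnection (bracket α β γ δ) nab ξ (e 0) (e 0) 3 = -δ ^ 2 * ξ 3 := by
  simp [lieDerivConnection, h.apply, bracket, ad₀, e_apply, PiLp.inner_apply]
  ring

end A52

open A52 in
/-- on `A_{5,2}` (brackets `[v1,v2]=αv3+βv4`, `[v1,v3]=γv4`,
`[v1,v4]=δv5`, `α,γ,δ>0`), every left-invariant projective vector field satisfies
`ξ1=ξ2=ξ3=ξ4=0` and `ω ≡ 0`; hence it is affine and lies in the center `span{v5}`. -/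
theorem stmt_19
    (α β γ δ : ℝ) (hα : 0 < α) (hγ : 0 < γ) (hδ : 0 < δ)
    (b : V →ₗ[ℝ] V →ₗ[ℝ] V)
    (hskew : ∀ x y, b x y = - b y x)
    (h12 : b (e 0) (e 1) = α • e 2 + β • e 3)
    (h13 : b (e 0) (e 2) = γ • e 3)
    (h14 : b (e 0) (e 3) = δ • e 4)
    (hzero : ∀ i j : Fin 5, i < j →
      (i, j) ∉ ({(0, 1), (0, 2), (0, 3)} : Set (Fin 5 × Fin 5)) → b (e i) (e j) = 0)
    (nab : V → V → V)
    (hkoszul : ∀ x y z, 2 * ⟪nab x y, z⟫ = ⟪b x y, z⟫ - ⟪b y z, x⟫ + ⟪b z x, y⟫)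
    (ξ : V) (ω : V →ₗ[ℝ] ℝ)
    (hproj : ∀ v w, b ξ (nab v w) - nab (b ξ v) w - nab v (b ξ w) = ω v • w + ω w • v) :
    (ξ 0 = 0 ∧ ξ 1 = 0 ∧ ξ 2 = 0 ∧ ξ 3 = 0) ∧ ω = 0 ∧
      (∀ v w, b ξ (nab v w) - nab (b ξ v) w - nab v (b ξ w) = 0) ∧
      ξ ∈ Submodule.span ℝ ({e 4} : Set V) := by
  obtain rfl := eq_bracket hskew h12 h13 h14 hzero
  have hoff {i j k : Fin 5} (hi : k ≠ i) (hj : k ≠ j) :=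
    lieDerivConnection_apply_eq_zero_of_ne hproj hi hj
  have hξ0 : ξ 0 = 0 := by
    simpa [hγ.ne'] using
      (lieDerivConnection_two_two_apply_zero hkoszul ξ).symm.trans (hoff (by decide) (by decide))
  have hξ1 : ξ 1 = 0 := by
    simpa [hα.ne', hδ.ne'] using
      (lieDerivConnection_three_four_apply_two hkoszul ξ).symm.trans (hoff (by decide) (by decide))
  have hξ2 : ξ 2 = 0 := by
    simpa [hγ.ne', hξ1] using
      (lieDerivConnection_zero_zero_apply_two hkoszul ξ).symm.trans (hoff (by decide) (by decide))
  have hξ3 : ξ 3 = 0 := by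
    simpa [hδ.ne'] using
      (lieDerivConnection_zero_zero_apply_three hkoszul ξ).symm.trans (hoff (by decide) (by decide))
  have hflat := IsLeviCivitaProduct.lieDerivConnection_eq_zero hkoszul
    (bracket_left_eq_zero hξ0 hξ1 hξ2 hξ3)
  have hω : ω = 0 :=
    LinearMap.eq_zero_of_forall_smul_add_smul_eq_zero fun v w => (hproj v w).symm.trans (hflat v w)
  exact ⟨⟨hξ0, hξ1, hξ2, hξ3⟩, hω, hflat, mem_span_e_four hξ0 hξ1 hξ2 hξ3⟩
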